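/- Let δ: Q₁ → G be an arrow weighting and Q ⋊ G the associated smash coproduct quiver. The right action of G on Q ⋊ G given by (u ⋊ g)·h = u ⋊ gh (for u a vertex or arrow) is a free action by quiver automorphisms, and the orbit quiver (Q ⋊ G)/G is isomorphic to Q. -/

import Mathlib

/-! As a set, `Q ⋊ G` is `Q × G`, both on vertices and on arrows (an arrow `a ⋊ g` is determined
by `a` and the group element `g` at its source), and the action of `h` becomes right
multiplication by `h` on the `G` factor. Right multiplication is free and simply transitive on
`G`, so the orbits are the fibres of the projection to `Q`. -/

open TensorProduct Quiver

noncomputable section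
open scoped Classical

universe u v

variable (k : Type*) [Field k]

/-- The set of all paths in a quiver, with endpoints bundled. -/
abbrev PathsIn (V : Type u) [Quiver.{v + 1} V] : Type (max u (v + 1)) := Σ a b : V, Quiver.Path a b

/-- The underlying vector space of the path coalgebra: the free `k`-module on paths. -/
abbrev PathCoalg (V : Type u) [Quiver.{v + 1} V] : Type _ := PathsIn V →₀ k

variable {V : Type u} [Quiver.{v + 1} V]

/-- The basis vector corresponding to a path. -/
def ιp (t : PathsIn V) : PathCoalg k V := Finsupp.single t 1

/-- The linear map on the path coalgebra induced by appending the arrow `e` to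
paths ending at the source of `e` (and killing all other paths). -/
def consMap {b c : V} (e : b ⟶ c) : PathCoalg k V →ₗ[k] PathCoalg k V :=
  Finsupp.lsum k fun t =>
    if h : t.2.1 = b then Finsupp.lsingle ⟨t.1, c, (h ▸ t.2.2).cons e⟩ else 0

/-- Comultiplication on basis paths:
`Δ(p) = Σ_{p = p₂p₁} p₂ ⊗ p₁ + t(p) ⊗ p + p ⊗ s(p)`, i.e. the sum of
`(second segment) ⊗ (first segment)` over all (possibly trivial) decompositions. -/
def deltaAux : ∀ {a b : V}, Quiver.Path a b → PathCoalg k V ⊗[k] PathCoalg k V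
  | a, _, .nil => ιp k ⟨a, a, .nil⟩ ⊗ₜ[k] ιp k ⟨a, a, .nil⟩
  | a, c, .cons p e =>
      ιp k ⟨c, c, .nil⟩ ⊗ₜ[k] ιp k ⟨a, c, p.cons e⟩
      + TensorProduct.map (consMap k e) LinearMap.id (deltaAux p)

/-- The comultiplication of the path coalgebra. -/
def ΔP : PathCoalg k V →ₗ[k] PathCoalg k V ⊗[k] PathCoalg k V :=
  Finsupp.lsum k fun t => LinearMap.toSpanSingleton k _ (deltaAux k t.2.2)

/-- The counit of the path coalgebra: `ε(p) = δ_{|p|,0}`. -/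
def εP : PathCoalg k V →ₗ[k] k :=
  Finsupp.lsum k fun t => if t.2.2.length = 0 then LinearMap.id else 0

variable {G : Type*} [Group G]

/-- The multiplicative extension of an arrow weighting `δ : Q₁ → G` to paths:
`δ(a_n ⋯ a_1) = δ(a_n) ⋯ δ(a_1)`, with value `1` on length-zero paths. -/
def wt (δ : ∀ {a b : V}, (a ⟶ b) → G) : ∀ {a b : V}, Quiver.Path a b → G
  | _, _, .nil => 1
  | _, _, .cons p e => δ e * wt @δ p

/-- The smash coproduct quiver `Q ⋊ G` attached to an arrow weighting
`δ : Q₁ → G`: vertices are pairs `x ⋊ g`. -/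
structure SmashQ (V : Type u) [Quiver.{v + 1} V] (G : Type*) [Group G]
    (δ : ∀ {a b : V}, (a ⟶ b) → G) where
  v : V
  g : G

/-- Arrows of `Q ⋊ G`: `a ⋊ g` goes from `s(a) ⋊ g` to `t(a) ⋊ δ(a)g`. -/
instance {δ : ∀ {a b : V}, (a ⟶ b) → G} : Quiver (SmashQ V G @δ) :=
  ⟨fun p q => {e : p.v ⟶ q.v // q.g = δ e * p.g}⟩

variable {δ : ∀ {a b : V}, (a ⟶ b) → G}

/-- The right action of `h ∈ G` on the vertices of `Q ⋊ G`: `(x ⋊ g)·h = x ⋊ gh`. -/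
def actV (δ : ∀ {a b : V}, (a ⟶ b) → G) (h : G) (p : SmashQ V G @δ) : SmashQ V G @δ :=
  ⟨p.v, p.g * h⟩

/-- The set of arrows of `Q ⋊ G` (with endpoints bundled). -/
abbrev ArrowsOf (δ : ∀ {a b : V}, (a ⟶ b) → G) : Type _ :=
  Σ p q : SmashQ V G @δ, p ⟶ q

/-- The right action of `h ∈ G` on the arrows of `Q ⋊ G`: `(a ⋊ g)·h = a ⋊ gh`.
It covers the action on vertices, hence `G` acts by quiver automorphisms. -/
def actA (δ : ∀ {a b : V}, (a ⟶ b) → G) (h : G) (s : ArrowsOf @δ) : ArrowsOf @δ :=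
  ⟨actV @δ h s.1, actV @δ h s.2.1,
    ⟨s.2.2.1, show s.2.1.g * h = δ s.2.2.1 * (s.1.g * h) by rw [← mul_assoc, ← s.2.2.2]⟩⟩

/-- The orbit relation on vertices of `Q ⋊ G`. -/
def rV (δ : ∀ {a b : V}, (a ⟶ b) → G) (p q : SmashQ V G @δ) : Prop :=
  ∃ h : G, q = actV @δ h p

/-- The orbit relation on arrows of `Q ⋊ G`. -/
def rA (δ : ∀ {a b : V}, (a ⟶ b) → G) (s t : ArrowsOf @δ) : Prop :=
  ∃ h : G, t = actA @δ h s

/-- The map from vertex orbits of `Q ⋊ G` to vertices of `Q`. -/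
def orbV (δ : ∀ {a b : V}, (a ⟶ b) → G) : Quot (rV @δ) → V :=
  Quot.lift (fun p => p.v) (by rintro a b ⟨h, rfl⟩; rfl)

/-- The map from arrow orbits of `Q ⋊ G` to arrows of `Q`. -/
def orbA (δ : ∀ {a b : V}, (a ⟶ b) → G) : Quot (rA @δ) → Σ a b : V, a ⟶ b :=
  Quot.lift (fun s => ⟨s.1.v, s.2.1.v, s.2.2.1⟩) (by rintro a b ⟨h, rfl⟩; rfl)

section RightMulOnProd

variable {X Y : Type*}

def IsRightMulOnProd (e : X ≃ Y × G) (act : G → X → X) : Prop :=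
  ∀ h x, e (act h x) = ((e x).1, (e x).2 * h)

namespace IsRightMulOnProd

variable {e : X ≃ Y × G} {act : G → X → X}

theorem act_one (hact : IsRightMulOnProd e act) (x : X) : act 1 x = x :=
  e.injective <| by rw [hact, mul_one]

theorem act_mul (hact : IsRightMulOnProd e act) (x : X) (h₁ h₂ : G) :
    act (h₁ * h₂) x = act h₂ (act h₁ x) :=
  e.injective <| by rw [hact, hact, hact, mul_assoc]

theorem bijective (hact : IsRightMulOnProd e act) (h : G) : Function.Bijective (act h) := by
  refine Function.bijective_iff_has_inverse.2 ⟨act h⁻¹, fun x => ?_, fun x => ?_⟩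
  · rw [← hact.act_mul, mul_inv_cancel, hact.act_one]
  · rw [← hact.act_mul, inv_mul_cancel, hact.act_one]

theorem eq_one_of_act_eq_self (hact : IsRightMulOnProd e act) (x : X) (h : G)
    (hx : act h x = x) : h = 1 := by
  have h2 := congrArg (fun x => (e x).2) hx
  rw [hact] at h2
  exact mul_eq_left.1 h2

theorem bijective_of_orbit (hact : IsRightMulOnProd e act)
    (f : Quot (fun x y => ∃ h, y = act h x) → Y) (hf : ∀ x, f (Quot.mk _ x) = (e x).1) :
    Function.Bijective f := by
  refine ⟨fun a b hab => ?_, fun y => ⟨Quot.mk _ (e.symm (y, 1)), by rw [hf, e.apply_symm_apply]⟩⟩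
  induction a using Quot.ind with | mk x => ?_
  induction b using Quot.ind with | mk y => ?_
  rw [hf, hf] at hab
  refine Quot.sound ⟨(e x).2⁻¹ * (e y).2, e.injective ?_⟩
  rw [hact, mul_inv_cancel_left, hab]

end IsRightMulOnProd

end RightMulOnProd

def smashVertexEquiv (δ : ∀ {a b : V}, (a ⟶ b) → G) : SmashQ V G @δ ≃ V × G where
  toFun p := (p.v, p.g)
  invFun x := ⟨x.1, x.2⟩
  left_inv _ := rfl
  right_inv _ := rfl

def smashArrowEquiv (δ : ∀ {a b : V}, (a ⟶ b) → G) :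
    ArrowsOf @δ ≃ (Σ a b : V, a ⟶ b) × G where
  toFun s := (⟨s.1.v, s.2.1.v, s.2.2.1⟩, s.1.g)
  invFun x := ⟨⟨x.1.1, x.2⟩, ⟨x.1.2.1, δ x.1.2.2 * x.2⟩, x.1.2.2, rfl⟩
  left_inv := by
    rintro ⟨⟨a, g⟩, ⟨b, g'⟩, e, he⟩
    dsimp only at e he ⊢
    subst he
    rfl
  right_inv _ := rfl

theorem isRightMulOnProd_actV (δ : ∀ {a b : V}, (a ⟶ b) → G) :
    IsRightMulOnProd (smashVertexEquiv @δ) (actV @δ) :=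
  fun _ _ => rfl

theorem isRightMulOnProd_actA (δ : ∀ {a b : V}, (a ⟶ b) → G) :
    IsRightMulOnProd (smashArrowEquiv @δ) (actA @δ) :=
  fun _ _ => rfl

theorem smash_quiver_orbit (δ : ∀ {a b : V}, (a ⟶ b) → G) :
    -- it is a right action, on vertices and on arrows
    (∀ p : SmashQ V G @δ, actV @δ 1 p = p)
    ∧ (∀ (p : SmashQ V G @δ) (h₁ h₂ : G),
        actV @δ (h₁ * h₂) p = actV @δ h₂ (actV @δ h₁ p))
    ∧ (∀ s : ArrowsOf @δ, actA @δ 1 s = s)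
    ∧ (∀ (s : ArrowsOf @δ) (h₁ h₂ : G),
        actA @δ (h₁ * h₂) s = actA @δ h₂ (actA @δ h₁ s))
    -- the action is by quiver automorphisms: bijective and compatible with s, t
    ∧ (∀ h : G, Function.Bijective (actV @δ h))
    ∧ (∀ h : G, Function.Bijective (actA @δ h))
    ∧ (∀ (h : G) (s : ArrowsOf @δ),
        (actA @δ h s).1 = actV @δ h s.1 ∧ (actA @δ h s).2.1 = actV @δ h s.2.1)
    -- the action is free
    ∧ (∀ (p : SmashQ V G @δ) (h : G), actV @δ h p = p → h = 1)
    -- the orbit quiver is isomorphic to `Q`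
    ∧ Function.Bijective (orbV @δ)
    ∧ Function.Bijective (orbA @δ)
    ∧ (∀ s : ArrowsOf @δ,
        orbV @δ (Quot.mk (rV @δ) s.1) = (orbA @δ (Quot.mk (rA @δ) s)).1
        ∧ orbV @δ (Quot.mk (rV @δ) s.2.1) = (orbA @δ (Quot.mk (rA @δ) s)).2.1) := by
  have hV := isRightMulOnProd_actV @δ
  have hA := isRightMulOnProd_actA @δ
  exact ⟨hV.act_one, hV.act_mul, hA.act_one, hA.act_mul, hV.bijective, hA.bijective,
    fun _ _ => ⟨rfl, rfl⟩, hV.eq_one_of_act_eq_self, hV.bijective_of_orbit _ fun _ => rfl,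
    hA.bijective_of_orbit _ fun _ => rfl, fun _ => ⟨rfl, rfl⟩⟩
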